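/- Let A be an affine set of n points on S² with symmetry group F. The orderings of A realize exactly n!/|F| pairwise distinct labeled affine order types, and this number is at least (n−1)!. -/

import Mathlib

/-!
Two orderings `e, e'` of `A` have the same labeled order type exactly when `e⁻¹ ∘ e'` preserves
all orientations, i.e. lies in `F`. Hence the labeled order types correspond to the cosets of `F`
in the permutation group of `A`, and there are `n! / |F|` of them.

For `|F| ≤ n`, pick an extreme point `p` of `A` (e.g. a point farthest from the pole of the
hemisphere). A symmetry fixing `p` preserves the angular order of `A \ {p}` around `p`, given by
the sign of `det(p, a, b)`; because a great circle separates `p` from the other points, this is a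
strict total order, and a finite linear order has no nontrivial automorphism. So a symmetry is
determined by the image of `p`.
-/

open scoped RealInnerProductSpace

noncomputable section

abbrev E3 := EuclideanSpace ℝ (Fin 3)

/-- Determinant of the 3×3 matrix whose rows are `p`, `q`, `r`. -/
def det3 (p q r : E3) : ℝ := Matrix.det (Matrix.of ![fun i => p i, fun i => q i, fun i => r i])

/-- The orientation `sgn(p,q,r)` of a triple of points: the sign of `det3 p q r`. -/
def sgn3 (p q r : E3) : ℝ := Real.sign (det3 p q r)

/-- An affine set: a finite subset of the unit sphere contained in an open hemisphere. -/
def IsAffineSet (A : Set E3) : Prop :=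
  A.Finite ∧ A ⊆ Metric.sphere (0 : E3) 1 ∧ ∃ v : E3, ∀ p ∈ A, 0 < ⟪v, p⟫

/-- General position for an affine set: no three of its points are coplanar with the origin. -/
def GenPos (A : Set E3) : Prop :=
  ∀ p ∈ A, ∀ q ∈ A, ∀ r ∈ A, p ≠ q → p ≠ r → q ≠ r → det3 p q r ≠ 0

/-- `p` is extreme in `A`: some great circle strictly separates `p` from `A \ {p}`. -/
def IsExtremePt (p : E3) (A : Set E3) : Prop :=
  ∃ v : E3, 0 < ⟪v, p⟫ ∧ ∀ q ∈ A, q ≠ p → ⟪v, q⟫ < 0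

/-- `f` preserves orientations on `S`. -/
def OrientationPreservingOn (f : E3 → E3) (S : Set E3) : Prop :=
  ∀ p ∈ S, ∀ q ∈ S, ∀ r ∈ S, sgn3 (f p) (f q) (f r) = sgn3 p q r

/-- The symmetry group of a set `A ⊆ S²`: the orientation preserving permutations of `A`. -/
def symGroup (A : Set E3) : Subgroup (Equiv.Perm ↥A) where
  carrier := {f | ∀ p q r : ↥A, sgn3 (f p) (f q) (f r) = sgn3 p q r}
  one_mem' := by intro p q r; rfl
  mul_mem' := by
    intro f g hf hg p q r
    simpa [Equiv.Perm.mul_apply] using (hf (g p) (g q) (g r)).trans (hg p q r)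
  inv_mem' := by
    intro f hf p q r
    simpa using (hf (f⁻¹ p) (f⁻¹ q) (f⁻¹ r)).symm

open Filter Topology

theorem Real.sign_eq_one_iff {r : ℝ} : Real.sign r = 1 ↔ 0 < r := by
  refine ⟨fun h => ?_, Real.sign_of_pos⟩
  rcases lt_trichotomy r 0 with hr | rfl | hr
  · norm_num [Real.sign_of_neg hr] at h
  · norm_num [Real.sign_zero] at h
  · exact hr

theorem Subgroup.nat_card_range_eq_index {G Y : Type*} [Group G] (H : Subgroup G) {φ : G → Y}
    (hφ : ∀ a b, φ a = φ b ↔ b * a⁻¹ ∈ H) : Nat.card (Set.range φ) = H.index :=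
  Nat.card_congr <| (Setoid.quotientKerEquivRange φ).symm.trans <|
    (Quotient.congrRight fun a b => (hφ a b).trans QuotientGroup.rightRel_apply.symm).trans
      (QuotientGroup.quotientRightRelEquivQuotientLeftRel H)

theorem Subgroup.factorial_pred_le_index {α : Type*} [Finite α] {H : Subgroup (Equiv.Perm α)}
    (hH : Nat.card H ≤ Nat.card α) : (Nat.card α - 1).factorial ≤ H.index := by
  have hpos : 0 < Nat.card α := Nat.card_pos.trans_le hH
  refine Nat.le_of_mul_le_mul_left ?_ hpos
  rw [Nat.mul_factorial_pred hpos.ne', ← Nat.card_perm, ← H.index_mul_card, mul_comm]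
  exact Nat.mul_le_mul_right _ hH

theorem Equiv.eq_refl_of_map_rel {T : Type*} [Finite T] (r : T → T → Prop)
    [IsStrictTotalOrder T r] (g : T ≃ T) (hg : ∀ a b, r a b → r (g a) (g b)) :
    g = Equiv.refl T := by
  classical
  let _ := linearOrderOfSTO r
  have hid := Subsingleton.elim ((show StrictMono g from hg).orderIsoOfSurjective g g.surjective)
    (OrderIso.refl T)
  ext a
  exact DFunLike.congr_fun hid a

theorem IsAffineSet.exists_isExtremePt {A : Set E3} (hA : IsAffineSet A) (hne : A.Nonempty) :
    ∃ p ∈ A, IsExtremePt p A := by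
  obtain ⟨hfin, hsph, u, hu⟩ := hA
  have hunit : ∀ q ∈ A, ‖q‖ = 1 := fun q hq => by simpa using hsph hq
  obtain ⟨p, hpA, hpmin⟩ := A.exists_min_image (⟪u, ·⟫) hfin hne
  -- `p` is a point of `A` farthest from the pole `u`; for `a` slightly above `⟪u, p⟫`, the
  -- great circle orthogonal to `a • p - u` cuts `p` off from `A`.
  have hsep : ∀ q ∈ {q ∈ A | q ≠ p}, ∀ᶠ a in 𝓝 ⟪u, p⟫, a * ⟪p, q⟫ < ⟪u, q⟫ := by
    rintro q ⟨hq, hqp⟩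
    have hpq : ⟪p, q⟫ < 1 := by
      refine lt_of_le_of_ne ?_ fun h => hqp ?_
      · simpa [hunit p hpA, hunit q hq] using real_inner_le_norm p q
      · exact ((inner_eq_one_iff_of_norm_eq_one (hunit p hpA) (hunit q hq)).1 h).symm
    refine ContinuousAt.eventually_lt (by fun_prop) continuousAt_const ?_
    nlinarith [hu p hpA, hpmin q hq]
  obtain ⟨a, hsepa, hpa⟩ := ((((hfin.sep _).eventually_all.2 hsep).filter_mono
    nhdsWithin_le_nhds).and (self_mem_nhdsWithin : Set.Ioi ⟪u, p⟫ ∈ 𝓝[>] ⟪u, p⟫)).exists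
  refine ⟨p, hpA, a • p - u, ?_, fun q hq hqp => ?_⟩
  · rw [inner_sub_left, real_inner_smul_left, real_inner_self_eq_norm_sq, hunit p hpA]
    simpa using hpa
  · rw [inner_sub_left, real_inner_smul_left]
    linarith [hsepa q ⟨hq, hqp⟩]

theorem E3.inner_eq (w p : E3) : ⟪w, p⟫ = w 0 * p 0 + w 1 * p 1 + w 2 * p 2 := by
  simp [PiLp.inner_apply, Fin.sum_univ_three]
  ring

theorem det3_eq (p q r : E3) : det3 p q r =
    p 0 * q 1 * r 2 - p 0 * q 2 * r 1 - p 1 * q 0 * r 2 + p 1 * q 2 * r 0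
      + p 2 * q 0 * r 1 - p 2 * q 1 * r 0 := by
  simp [det3, Matrix.det_fin_three]

theorem det3_swap_last (p q r : E3) : det3 p r q = -det3 p q r := by
  simp only [det3_eq]
  ring

theorem det3_last_self (p q : E3) : det3 p q q = 0 := by
  simp only [det3_eq]
  ring

/-- Laplace expansion of the 4×4 determinant with rows `(⟪w, x⟫, x)`, `x = p, q, r, s`, which
vanishes since its first column is a combination of the other three. -/
theorem det3_cramer (w p q r s : E3) :
    det3 q r s * ⟪w, p⟫ - det3 p r s * ⟪w, q⟫ + det3 p q s * ⟪w, r⟫ - det3 p q r * ⟪w, s⟫ = 0 := by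
  simp only [det3_eq, E3.inner_eq]
  ring

theorem det3_pos_trans {u v p q r s : E3} (hup : 0 < ⟪u, p⟫) (huq : 0 < ⟪u, q⟫)
    (hur : 0 < ⟪u, r⟫) (hus : 0 < ⟪u, s⟫) (hvp : 0 < ⟪v, p⟫) (hvq : ⟪v, q⟫ < 0)
    (hvr : ⟪v, r⟫ < 0) (hvs : ⟪v, s⟫ < 0) (hqr : 0 < det3 p q r) (hrs : 0 < det3 p r s) :
    0 < det3 p q s := by
  have hq : 0 < ⟪u, q⟫ * ⟪v, p⟫ - ⟪v, q⟫ * ⟪u, p⟫ := by nlinarith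
  have hr : 0 < ⟪u, r⟫ * ⟪v, p⟫ - ⟪v, r⟫ * ⟪u, p⟫ := by nlinarith
  have hs : 0 < ⟪u, s⟫ * ⟪v, p⟫ - ⟪v, s⟫ * ⟪u, p⟫ := by nlinarith
  have key : det3 p q s * (⟪u, r⟫ * ⟪v, p⟫ - ⟪v, r⟫ * ⟪u, p⟫) =
      det3 p r s * (⟪u, q⟫ * ⟪v, p⟫ - ⟪v, q⟫ * ⟪u, p⟫) +
        det3 p q r * (⟪u, s⟫ * ⟪v, p⟫ - ⟪v, s⟫ * ⟪u, p⟫) := by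
    linear_combination ⟪v, p⟫ * det3_cramer u p q r s - ⟪u, p⟫ * det3_cramer v p q r s
  exact pos_of_mul_pos_left (key ▸ by positivity) hr.le

theorem IsAffineSet.isStrictTotalOrder_angular {A : Set E3} (hA : IsAffineSet A)
    (hgp : GenPos A) {p : A} (hp : IsExtremePt p A) :
    IsStrictTotalOrder {q : A // q ≠ p} fun a b => 0 < det3 p a.1 b.1 := by
  obtain ⟨-, -, u, hu⟩ := hA
  obtain ⟨v, hvp, hv⟩ := hp
  have hne : ∀ a : {q : A // q ≠ p}, (a.1 : E3) ≠ p := fun a h => a.2 (Subtype.ext h)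
  refine { trichotomous := fun a b hab hba => ?_, irrefl := fun a => ?_, trans := ?_ }
  · by_contra h
    have hdet := hgp p p.2 a.1 a.1.2 b.1 b.1.2 (hne a).symm (hne b).symm
      fun h' => h (Subtype.ext (Subtype.ext h'))
    rw [det3_swap_last, neg_pos] at hba
    exact hdet (le_antisymm (not_lt.1 hab) (not_lt.1 hba))
  · simp [det3_last_self]
  · intro a b c
    exact det3_pos_trans (hu p p.2) (hu a a.1.2) (hu b b.1.2) (hu c c.1.2) hvp
      (hv a a.1.2 (hne a)) (hv b b.1.2 (hne b)) (hv c c.1.2 (hne c))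

theorem IsAffineSet.eq_one_of_mem_symGroup_of_apply_eq {A : Set E3} (hA : IsAffineSet A)
    (hgp : GenPos A) {p : A} (hp : IsExtremePt p A) {f : Equiv.Perm A} (hf : f ∈ symGroup A)
    (hfp : f p = p) : f = 1 := by
  have := hA.1.to_subtype
  have := hA.isStrictTotalOrder_angular hgp hp
  let g : {q : A // q ≠ p} ≃ {q : A // q ≠ p} :=
    f.subtypeEquiv fun q => (f.injective.ne_iff' hfp).symm
  have hg : g = Equiv.refl _ := Equiv.eq_refl_of_map_rel _ g fun a b hab => by
    have hsgn := hf p a b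
    rw [hfp] at hsgn
    exact Real.sign_eq_one_iff.1 (hsgn.trans (Real.sign_eq_one_iff.2 hab))
  ext q : 1
  by_cases hq : q = p
  · rw [hq, hfp]
    rfl
  · exact congrArg Subtype.val (Equiv.ext_iff.1 hg ⟨q, hq⟩)

theorem IsAffineSet.nat_card_symGroup_le {A : Set E3} (hA : IsAffineSet A) (hgp : GenPos A)
    (hne : A.Nonempty) : Nat.card (symGroup A) ≤ A.ncard := by
  have := hA.1.to_subtype
  obtain ⟨p, hpA, hp⟩ := hA.exists_isExtremePt hne
  rw [← Nat.card_coe_set_eq]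
  refine Nat.card_le_card_of_injective (fun f : symGroup A => f.1 ⟨p, hpA⟩) fun f g hfg => ?_
  have := hA.eq_one_of_mem_symGroup_of_apply_eq hgp (p := ⟨p, hpA⟩) hp (g⁻¹ * f).2
    (by simp [Equiv.Perm.mul_apply, hfg])
  exact (inv_mul_eq_one.1 (Subtype.ext this)).symm

def labeledOrderType {ι : Type*} (e : ι → E3) : ι → ι → ι → ℝ :=
  fun i j k => sgn3 (e i) (e j) (e k)

theorem labeledOrderType_eq_iff {ι : Type*} {A : Set E3} (e e' : ι ≃ A) :
    labeledOrderType (fun i => (e i : E3)) = labeledOrderType (fun i => (e' i : E3)) ↔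
      e.symm.trans e' ∈ symGroup A := by
  constructor
  · intro h a b c
    simpa [labeledOrderType] using (congrFun (congrFun (congrFun h (e.symm a)) (e.symm b))
      (e.symm c)).symm
  · intro h
    funext i j k
    simpa [labeledOrderType] using (h (e i) (e j) (e k)).symm

/-- An affine set `A` of `n` points with symmetry group `F` realizes,
over all orderings of its points, exactly `n! / |F|` pairwise distinct labeled affine
order types (recorded as the triple-orientation functions on labels), and this number is
at least `(n−1)!`. -/
theorem stmt13 (A : Set E3) (hA : IsAffineSet A) (hgp : GenPos A)
    (n : ℕ) (hn : A.ncard = n) :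
    {σ : Fin n → Fin n → Fin n → ℝ | ∃ e : Fin n ≃ ↥A,
        ∀ i j k : Fin n, σ i j k = sgn3 (e i) (e j) (e k)}.ncard
      = n.factorial / Nat.card (symGroup A) ∧
    (n - 1).factorial ≤ n.factorial / Nat.card (symGroup A) := by
  have := hA.1.to_subtype
  have hcard : Nat.card A = n := by rw [Nat.card_coe_set_eq, hn]
  let e₀ : Fin n ≃ A := (Finite.equivFinOfCardEq hcard).symm
  have hrange : {σ : Fin n → Fin n → Fin n → ℝ | ∃ e : Fin n ≃ ↥A,
      ∀ i j k : Fin n, σ i j k = sgn3 (e i) (e j) (e k)} =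
      Set.range fun g : Equiv.Perm A => labeledOrderType fun i => (e₀.trans g i : E3) := by
    ext σ
    refine ⟨fun ⟨e, he⟩ => ⟨e₀.symm.trans e, ?_⟩, fun ⟨g, hg⟩ => ⟨e₀.trans g, ?_⟩⟩
    · funext i j k
      simp [labeledOrderType, he]
    · simp [← hg, labeledOrderType]
  have hindex : n.factorial / Nat.card (symGroup A) = (symGroup A).index := by
    rw [← hcard, ← Nat.card_perm, ← (symGroup A).index_mul_card, Nat.mul_div_cancel _ Nat.card_pos]
  rw [hindex, hrange, ← Nat.card_coe_set_eq]
  refine ⟨(symGroup A).nat_card_range_eq_index fun g h => ?_, ?_⟩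
  · rw [labeledOrderType_eq_iff, show (e₀.trans g).symm.trans (e₀.trans h) = h * g⁻¹ by
      ext
      simp [Equiv.Perm.mul_apply]]
  · rcases A.eq_empty_or_nonempty with rfl | hne
    · rw [← hn, Set.ncard_empty]
      exact Nat.one_le_iff_ne_zero.2 Subgroup.index_ne_zero_of_finite
    · rw [← hcard]
      exact Subgroup.factorial_pred_le_index
        ((hA.nat_card_symGroup_le hgp hne).trans_eq (Nat.card_coe_set_eq A).symm)
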